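/- For an open set Ω ⊆ ℝ^d, the map p ↦ p λ_p(Ω)^{1/p} is monotonically nondecreasing on [1, ∞), i.e., if 1 ≤ q ≤ p < ∞ then q λ_q(Ω)^{1/q} ≤ p λ_p(Ω)^{1/p}. -/

import Mathlib

/-!
If `u` is admissible for `λ_p`, then `v = |u|^(p/q)` is admissible for `λ_q`, with
`|v|^q = |u|^p` and `|∇v|^q ≤ (p/q)^q |u|^(p-q) |∇u|^q`. Hölder's inequality with
exponents `p/(p-q)` and `p/q` bounds `∫ |u|^(p-q) |∇u|^q` by
`(∫ |u|^p)^(1-q/p) (∫ |∇u|^p)^(q/p)`, so the Rayleigh quotients satisfy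
`R_q(v) ≤ (p/q)^q R_p(u)^(q/p)`, i.e. `q λ_q^(1/q) ≤ p R_p(u)^(1/p)`.
Taking the infimum over `u` gives the claim.
-/

open MeasureTheory
open scoped ENNReal

/-- First Dirichlet eigenvalue of the `p`-Laplacian on an open set `Ω ⊆ ℝ^d`,
defined as the infimum of Rayleigh quotients over nonzero `C_c^1` test functions
supported in `Ω`; by convention it is `+∞` if no admissible function exists. -/
noncomputable def lambdaP (d : ℕ) (p : ℝ) (Ω : Set (EuclideanSpace ℝ (Fin d))) : ℝ≥0∞ :=
  sInf {R : ℝ≥0∞ | ∃ u : EuclideanSpace ℝ (Fin d) → ℝ,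
    ContDiff ℝ 1 u ∧ HasCompactSupport u ∧ tsupport u ⊆ Ω ∧ u ≠ 0 ∧
    R = ENNReal.ofReal ((∫ x, ‖gradient u x‖ ^ p) / (∫ x, |u x| ^ p))}

theorem integral_rpow_mul_rpow_le {α : Type*} [MeasurableSpace α] {μ : Measure α}
    {f g : α → ℝ} (hf : 0 ≤ f) (hg : 0 ≤ g) (hfi : Integrable f μ) (hgi : Integrable g μ)
    {a b : ℝ} (ha : 0 ≤ a) (hb : 0 ≤ b) (hab : a + b = 1) :
    ∫ x, f x ^ a * g x ^ b ∂μ ≤ (∫ x, f x ∂μ) ^ a * (∫ x, g x ∂μ) ^ b := by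
  have hmeas : AEStronglyMeasurable (fun x ↦ f x ^ a * g x ^ b) μ :=
    ((hfi.aemeasurable.pow_const a).mul (hgi.aemeasurable.pow_const b)).aestronglyMeasurable
  have hofReal (x : α) : ENNReal.ofReal (f x ^ a * g x ^ b) =
      ENNReal.ofReal (f x) ^ a * ENNReal.ofReal (g x) ^ b := by
    rw [ENNReal.ofReal_mul (Real.rpow_nonneg (hf x) a), ENNReal.ofReal_rpow_of_nonneg (hf x) ha,
      ENNReal.ofReal_rpow_of_nonneg (hg x) hb]
  have hbound := ENNReal.lintegral_mul_norm_pow_le (μ := μ) hfi.aemeasurable.ennreal_ofReal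
    hgi.aemeasurable.ennreal_ofReal ha hb hab
  rw [← ofReal_integral_eq_lintegral_ofReal hfi (.of_forall hf),
    ← ofReal_integral_eq_lintegral_ofReal hgi (.of_forall hg)] at hbound
  calc ∫ x, f x ^ a * g x ^ b ∂μ
      = (∫⁻ x, ENNReal.ofReal (f x) ^ a * ENNReal.ofReal (g x) ^ b ∂μ).toReal := by
        simp_rw [← hofReal]
        exact integral_eq_lintegral_of_nonneg_ae (.of_forall fun x ↦
          mul_nonneg (Real.rpow_nonneg (hf x) a) (Real.rpow_nonneg (hg x) b)) hmeas
    _ ≤ (ENNReal.ofReal (∫ x, f x ∂μ) ^ a * ENNReal.ofReal (∫ x, g x ∂μ) ^ b).toReal :=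
        ENNReal.toReal_mono (by finiteness) hbound
    _ = (∫ x, f x ∂μ) ^ a * (∫ x, g x ∂μ) ^ b := by
        rw [ENNReal.toReal_mul, ← ENNReal.toReal_rpow, ← ENNReal.toReal_rpow,
          ENNReal.toReal_ofReal (integral_nonneg hf), ENNReal.toReal_ofReal (integral_nonneg hg)]

section RayleighQuotient

variable {E : Type*} [NormedAddCommGroup E] [InnerProductSpace ℝ E] [CompleteSpace E]

theorem norm_gradient (f : E → ℝ) (x : E) : ‖gradient f x‖ = ‖fderiv ℝ f x‖ :=
  (InnerProductSpace.toDual ℝ E).symm.norm_map _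

variable [MeasurableSpace E]

noncomputable def rayleighQuotient (μ : Measure E) (p : ℝ) (u : E → ℝ) : ℝ :=
  (∫ x, ‖gradient u x‖ ^ p ∂μ) / (∫ x, |u x| ^ p ∂μ)

theorem rayleighQuotient_nonneg (μ : Measure E) (p : ℝ) (u : E → ℝ) :
    0 ≤ rayleighQuotient μ p u :=
  div_nonneg (integral_nonneg fun _ ↦ by positivity) (integral_nonneg fun _ ↦ by positivity)

variable [BorelSpace E] {μ : Measure E} [IsFiniteMeasureOnCompacts μ]

theorem rayleighQuotient_abs_rpow_div_le {u : E → ℝ} (hu : ContDiff ℝ 1 u)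
    (hc : HasCompactSupport u) {p q : ℝ} (hq : 0 < q) (hqp : q < p) :
    rayleighQuotient μ q (fun x ↦ |u x| ^ (p / q)) ≤
      (p / q) ^ q * rayleighQuotient μ p u ^ (q / p) := by
  have hp : 0 < p := hq.trans hqp
  have hα : 1 < p / q := (one_lt_div hq).2 hqp
  have hgrad (x : E) : ‖fderiv ℝ (fun x ↦ |u x| ^ (p / q)) x‖ ≤
      p / q * |u x| ^ (p / q - 1) * ‖fderiv ℝ u x‖ := by
    simpa only [Real.norm_eq_abs] using
      norm_fderiv_norm_rpow_le (hu.differentiable one_ne_zero) hα (x := x)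
  have hDu : Continuous fun x ↦ ‖fderiv ℝ u x‖ := (hu.continuous_fderiv one_ne_zero).norm
  have habs_rpow {r : ℝ} (hr : 0 < r) : HasCompactSupport fun x ↦ |u x| ^ r :=
    hc.comp_left (g := fun t : ℝ ↦ |t| ^ r) (by simp [hr.ne'])
  have hDu_rpow {r : ℝ} (hr : 0 < r) : HasCompactSupport fun x ↦ ‖fderiv ℝ u x‖ ^ r :=
    (hc.fderiv (𝕜 := ℝ)).norm.comp_left (g := fun t : ℝ ↦ t ^ r) (Real.zero_rpow hr.ne')
  set A := ∫ x, ‖fderiv ℝ u x‖ ^ p ∂μ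
  set B := ∫ x, |u x| ^ p ∂μ
  have hA : 0 ≤ A := integral_nonneg fun x ↦ by positivity
  have hB : 0 ≤ B := integral_nonneg fun x ↦ by positivity
  have hnum : ∫ x, ‖fderiv ℝ (fun x ↦ |u x| ^ (p / q)) x‖ ^ q ∂μ ≤
      (p / q) ^ q * (B ^ (1 - q / p) * A ^ (q / p)) := calc
    _ ≤ ∫ x, (p / q) ^ q * (|u x| ^ (p - q) * ‖fderiv ℝ u x‖ ^ q) ∂μ := by
      refine integral_mono_of_nonneg (.of_forall fun x ↦ by positivity) ?_
        (.of_forall fun x ↦ ?_)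
      · refine Integrable.const_mul ?_ _
        exact ((hu.continuous.abs.rpow_const fun _ ↦ .inr (sub_pos.2 hqp).le).mul
          (hDu.rpow_const fun _ ↦ .inr hq.le)).integrable_of_hasCompactSupport
          (habs_rpow (sub_pos.2 hqp)).mul_right
      · refine (Real.rpow_le_rpow (norm_nonneg _) (hgrad x) hq.le).trans_eq ?_
        rw [Real.mul_rpow (by positivity) (by positivity),
          Real.mul_rpow (by positivity) (by positivity), ← Real.rpow_mul (abs_nonneg _),
          sub_one_mul, div_mul_cancel₀ p hq.ne', mul_assoc]
    _ = (p / q) ^ q *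
          ∫ x, (|u x| ^ p) ^ (1 - q / p) * (‖fderiv ℝ u x‖ ^ p) ^ (q / p) ∂μ := by
      rw [integral_const_mul]
      congr 2 with x
      rw [← Real.rpow_mul (abs_nonneg _), ← Real.rpow_mul (norm_nonneg _), mul_one_sub,
        mul_div_cancel₀ q hp.ne']
    _ ≤ (p / q) ^ q * (B ^ (1 - q / p) * A ^ (q / p)) := by
      gcongr
      refine integral_rpow_mul_rpow_le (fun x ↦ by positivity) (fun x ↦ by positivity) ?_ ?_
        ?_ (by positivity) (by ring)
      · exact (hu.continuous.abs.rpow_const fun _ ↦ .inr hp.le).integrable_of_hasCompactSupport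
          (habs_rpow hp)
      · exact (hDu.rpow_const fun _ ↦ .inr hp.le).integrable_of_hasCompactSupport (hDu_rpow hp)
      · rw [sub_nonneg, div_le_one hp]; exact hqp.le
  have hden : ∫ x, |(|u x| ^ (p / q))| ^ q ∂μ = B := by
    refine integral_congr_ae (.of_forall fun x ↦ ?_)
    simp only
    rw [abs_of_nonneg (by positivity), ← Real.rpow_mul (abs_nonneg _), div_mul_cancel₀ p hq.ne']
  have hcancel : B ^ (1 - q / p) * A ^ (q / p) / B = (A / B) ^ (q / p) := by
    -- if `B = 0`, both sides vanish since `x / 0 = 0`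
    rcases hB.eq_or_lt with hB0 | hBpos
    · simp [← hB0, Real.zero_rpow (div_pos hq hp).ne']
    · rw [Real.div_rpow hA hB, Real.rpow_sub hBpos, Real.rpow_one]
      field_simp
  simp only [rayleighQuotient, norm_gradient]
  rw [hden, ← hcancel, ← mul_div_assoc]
  exact div_le_div_of_nonneg_right hnum hB

end RayleighQuotient

section TestFunction

variable {E : Type*} [NormedAddCommGroup E] [NormedSpace ℝ E]

structure IsTestFunction (Ω : Set E) (u : E → ℝ) : Prop where
  contDiff : ContDiff ℝ 1 u
  hasCompactSupport : HasCompactSupport u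
  tsupport_subset : tsupport u ⊆ Ω
  ne_zero : u ≠ 0

theorem IsTestFunction.abs_rpow {Ω : Set E} {u : E → ℝ} (hu : IsTestFunction Ω u) {α : ℝ}
    (hα : 1 < α) : IsTestFunction Ω fun x ↦ |u x| ^ α where
  contDiff := by
    have h : ContDiff ℝ 1 fun t : ℝ ↦ |t| ^ α := by
      simpa only [Real.norm_eq_abs] using contDiff_norm_rpow (E := ℝ) hα
    exact h.comp hu.contDiff
  hasCompactSupport := hu.hasCompactSupport.comp_left (g := fun t : ℝ ↦ |t| ^ α)
    (by simp [(one_pos.trans hα).ne'])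
  tsupport_subset := (tsupport_comp_subset (g := fun t : ℝ ↦ |t| ^ α)
    (by simp [(one_pos.trans hα).ne']) u).trans hu.tsupport_subset
  ne_zero := by
    obtain ⟨x, hx⟩ := Function.ne_iff.1 hu.ne_zero
    exact Function.ne_iff.2 ⟨x, (Real.rpow_pos_of_pos (abs_pos.2 hx) α).ne'⟩

end TestFunction

theorem lambdaP_le_rayleighQuotient {d : ℕ} {p : ℝ} {Ω : Set (EuclideanSpace ℝ (Fin d))}
    {u : EuclideanSpace ℝ (Fin d) → ℝ} (hu : IsTestFunction Ω u) :
    lambdaP d p Ω ≤ ENNReal.ofReal (rayleighQuotient volume p u) :=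
  sInf_le ⟨u, hu.contDiff, hu.hasCompactSupport, hu.tsupport_subset, hu.ne_zero, rfl⟩

theorem le_lambdaP {d : ℕ} {p : ℝ} {Ω : Set (EuclideanSpace ℝ (Fin d))} {c : ℝ≥0∞}
    (h : ∀ u, IsTestFunction Ω u →
      c ≤ ENNReal.ofReal (rayleighQuotient volume p u)) :
    c ≤ lambdaP d p Ω :=
  le_sInf fun _ ⟨u, hu₁, hu₂, hu₃, hu₄, hR⟩ ↦ hR ▸ h u ⟨hu₁, hu₂, hu₃, hu₄⟩

theorem mul_rpow_one_div_le_iff {x y p : ℝ} (hx : 0 ≤ x) (hy : 0 ≤ y) (hp : 0 < p) :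
    p * x ^ (1 / p) ≤ y ↔ x ≤ (y / p) ^ p := by
  rw [← le_div_iff₀' hp, one_div, Real.rpow_inv_le_iff_of_pos hx (by positivity) hp]

theorem le_mul_rpow_one_div_iff {x y p : ℝ} (hx : 0 ≤ x) (hy : 0 ≤ y) (hp : 0 < p) :
    x ≤ p * y ^ (1 / p) ↔ (x / p) ^ p ≤ y := by
  rw [← div_le_iff₀' hp, one_div, Real.le_rpow_inv_iff_of_pos (by positivity) hy hp]

theorem mul_toReal_lambdaP_rpow_le {d : ℕ} {p q : ℝ} (hq : 0 < q) (hqp : q < p)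
    {Ω : Set (EuclideanSpace ℝ (Fin d))} {u : EuclideanSpace ℝ (Fin d) → ℝ}
    (hu : IsTestFunction Ω u) :
    q * (lambdaP d q Ω).toReal ^ (1 / q) ≤ p * rayleighQuotient volume p u ^ (1 / p) := by
  have hp : 0 < p := hq.trans hqp
  have hR := rayleighQuotient_nonneg volume p u
  rw [mul_rpow_one_div_le_iff ENNReal.toReal_nonneg (by positivity) hq]
  refine ENNReal.toReal_le_of_le_ofReal (by positivity) <|
    (lambdaP_le_rayleighQuotient (hu.abs_rpow ((one_lt_div hq).2 hqp))).trans <|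
    ENNReal.ofReal_le_ofReal <|
    (rayleighQuotient_abs_rpow_div_le hu.contDiff hu.hasCompactSupport hq hqp).trans_eq ?_
  rw [mul_div_right_comm, Real.mul_rpow (by positivity) (by positivity), ← Real.rpow_mul hR,
    one_div_mul_eq_div]

theorem mono_p_lambda_general (d : ℕ) (p q : ℝ) (hq : 1 ≤ q) (hqp : q ≤ p)
    (Ω : Set (EuclideanSpace ℝ (Fin d)))
    (hpfin : lambdaP d p Ω ≠ ⊤) :
    q * (lambdaP d q Ω).toReal ^ (1 / q) ≤ p * (lambdaP d p Ω).toReal ^ (1 / p) := by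
  obtain rfl | hlt := hqp.eq_or_lt
  · exact le_rfl
  have hq₀ : 0 < q := zero_lt_one.trans_le hq
  have hp₀ : 0 < p := hq₀.trans hlt
  rw [le_mul_rpow_one_div_iff (by positivity) ENNReal.toReal_nonneg hp₀,
    ← ENNReal.ofReal_le_iff_le_toReal hpfin]
  refine le_lambdaP fun u hu ↦ ENNReal.ofReal_le_ofReal ?_
  rw [← le_mul_rpow_one_div_iff (by positivity) (rayleighQuotient_nonneg volume p u) hp₀]
  exact mul_toReal_lambdaP_rpow_le hq₀ hlt hu

/-- Monotonicity: the map `p ↦ p λ_p(Ω)^{1/p}` is nondecreasing on `[1, ∞)`. -/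
theorem mono_p_lambda (d : ℕ) (p q : ℝ) (hq : 1 ≤ q) (hqp : q ≤ p)
    (Ω : Set (EuclideanSpace ℝ (Fin d))) (hΩ : IsOpen Ω)
    (hpfin : lambdaP d p Ω ≠ ⊤) (hqfin : lambdaP d q Ω ≠ ⊤) :
    q * (lambdaP d q Ω).toReal ^ (1 / q) ≤ p * (lambdaP d p Ω).toReal ^ (1 / p) :=
  mono_p_lambda_general d p q hq hqp Ω hpfin
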